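/- Let k be a commutative ring and n ≥ 1. The cohomology of the commutative DGA (k[x]/(x^{n+1}) ⊗ Γ(sx) ⊗ Λ(sy), D̄) with |x| = 2, |sy| = 2n+1, |sx| = 1, D̄(x) = D̄(sx) = 0 and D̄(sy) = (n+1)·x^n·sx, is isomorphic as a graded k-module to k ⊕ ⊕_{1≤p≤n, i∈ℕ} k·x^p γ^i(sy) ⊕ ⊕_{0≤p≤n−1, i∈ℕ} k·x^p (sx) γ^i(sy) ⊕ ⊕_{i∈ℕ} (k/(n+1)k)·x^n (sx) γ^i(sy) ⊕ ⊕_{i≥1} (_{n+1}k)·γ^i(sy), where _{n+1}k and k/(n+1)k are the kernel and cokernel of multiplication by n+1 on k. -/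

import Mathlib

/-!
STATEMENT 16.  The commutative DGA
`(k[x]/(x^{n+1}) ⊗ Γ(sy) ⊗ Λ(sx), D̄)` with `D̄x = D̄(sx) = 0` and
`D̄(sy) = (n+1)·xⁿ·sx` (extended as a derivation compatible with divided
powers, so `D̄(γ^i(sy)) = (n+1)xⁿ·sx·γ^{i-1}(sy)`) computes the Hochschild
homology of `H^*(ℂPⁿ; k)`.  We model the underlying module by its monomial
basis `x^p (sx)^e γ^i(sy)`, `0 ≤ p ≤ n`, `e ∈ {0,1}`, `i ∈ ℕ`; the
differential sends `x^p γ^i(sy)` (with `i ≥ 1`) to `(n+1)·x^{p+n}(sx)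
γ^{i-1}(sy)`, which vanishes unless `p = 0` by truncation, and kills all
other monomials.  The statement: its homology is, as a `k`-module,
`k ⊕ ⊕_{1≤p≤n, i∈ℕ} k·x^pγ^i(sy) ⊕ ⊕_{0≤p≤n-1, i} k·x^p(sx)γ^i(sy)
⊕ ⊕_i (k/(n+1)k)·xⁿ(sx)γ^i(sy) ⊕ ⊕_{i≥1} (ₙ₊₁k)·γ^i(sy)`.
-/

variable (k : Type*) [CommRing k] (n : ℕ)

/-- Monomial basis `x^p (sx)^e γ^i(sy)`. -/
abbrev CPBasis (n : ℕ) := Fin (n + 1) × Bool × ℕ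

/-- The underlying module of the small Hochschild complex of `H^*(ℂPⁿ)`. -/
abbrev CPModule (k : Type*) [CommRing k] (n : ℕ) := CPBasis n →₀ k

/-- The differential on monomials:
`D̄(x^p γ^i(sy)) = (n+1) x^{p+n} (sx) γ^{i-1}(sy)` for `i ≥ 1`, which is zero
unless `p = 0` (truncation `x^{n+1} = 0`); all other monomials are killed. -/
noncomputable def CPd (g : CPBasis n) : CPModule k n :=
  match g with
  | (p, false, i + 1) =>
      if p = (0 : Fin (n + 1)) then
        (n + 1 : ℤ) • Finsupp.single ((Fin.last n, true, i) : CPBasis n) (1 : k)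
      else 0
  | _ => 0

/-- The differential, extended `k`-linearly. -/
noncomputable def CPdiff : CPModule k n →ₗ[k] CPModule k n :=
  Finsupp.lift (CPModule k n) k (CPBasis n) (CPd k n)

/-!
After reindexing the monomial basis, `D̄` is the direct sum of complexes with zero differential
(spanned by `1`, by `x^p γ^i(sy)` with `p ≥ 1` and by `x^p (sx) γ^i(sy)` with `p < n`) and of
one two-term complex `(n+1) : k·γ^{i+1}(sy) → k·xⁿ(sx)γ^i(sy)` for each `i`: the truncation
`x^{n+1} = 0` kills `D̄(x^p γ^{i+1}(sy))` for `p ≥ 1`. A two-term complex `g : Q → P` has homology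
`coker g ⊕ ker g`, which for multiplication by `n+1` is `k/(n+1)k ⊕ ₙ₊₁k` in each degree.
-/

open LinearMap

section Homology

variable {R M N T T' : Type*} [Ring R] [AddCommGroup M] [Module R M] [AddCommGroup N]
  [Module R N] [AddCommGroup T] [Module R T] [AddCommGroup T'] [Module R T']

def HasHomology (D : M →ₗ[R] M) (T : Type*) [AddCommGroup T] [Module R T] : Prop :=
  ∃ φ : ker D →ₗ[R] T, Function.Surjective φ ∧ ker φ = (range D).comap (ker D).subtype

theorem HasHomology.congr {D : M →ₗ[R] M} (h : HasHomology D T) (ε : T ≃ₗ[R] T') :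
    HasHomology D T' := by
  obtain ⟨φ, hφ, hker⟩ := h
  exact ⟨ε.toLinearMap ∘ₗ φ, ε.surjective.comp hφ, by rw [LinearEquiv.ker_comp, hker]⟩

theorem HasHomology.of_conj {D : M →ₗ[R] M} {D' : N →ₗ[R] N} (e : M ≃ₗ[R] N)
    (he : e.toLinearMap ∘ₗ D = D' ∘ₗ e.toLinearMap) (h : HasHomology D' T) :
    HasHomology D T := by
  obtain ⟨φ, hφ, hker⟩ := h
  have hkerD : (ker D).map e.toLinearMap = ker D' := by
    rw [← LinearEquiv.ker_comp e D, he, ker_comp, Submodule.map_comap_eq_of_surjective e.surjective]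
  have hrange : range D' = (range D).map e.toLinearMap := by
    rw [← range_comp, he, range_comp_of_range_eq_top _ e.range]
  refine ⟨φ ∘ₗ (e.ofSubmodules _ _ hkerD).toLinearMap,
    hφ.comp (e.ofSubmodules _ _ hkerD).surjective, ?_⟩
  ext x
  rw [mem_ker, comp_apply, ← mem_ker, hker, Submodule.mem_comap, Submodule.mem_comap, hrange,
    Submodule.mem_map_equiv]
  simp

theorem hasHomology_zero : HasHomology (0 : M →ₗ[R] M) M := by
  refine ⟨(ker (0 : M →ₗ[R] M)).subtype, fun m => ⟨⟨m, by simp⟩, rfl⟩, ?_⟩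
  rw [range_zero, Submodule.comap_bot]

theorem HasHomology.prodMap {D₁ : M →ₗ[R] M} {D₂ : N →ₗ[R] N} (h₁ : HasHomology D₁ T)
    (h₂ : HasHomology D₂ T') : HasHomology (D₁.prodMap D₂) (T × T') := by
  obtain ⟨φ₁, hφ₁, hker₁⟩ := h₁
  obtain ⟨φ₂, hφ₂, hker₂⟩ := h₂
  let π₁ : ker (D₁.prodMap D₂) →ₗ[R] ker D₁ := (fst R M N).restrict fun x hx => by
    simp_all [ker_prodMap]
  let π₂ : ker (D₁.prodMap D₂) →ₗ[R] ker D₂ := (snd R M N).restrict fun x hx => by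
    simp_all [ker_prodMap]
  refine ⟨(φ₁ ∘ₗ π₁).prod (φ₂ ∘ₗ π₂), ?_, ?_⟩
  · rintro ⟨t, t'⟩
    obtain ⟨⟨x, hx⟩, rfl⟩ := hφ₁ t
    obtain ⟨⟨y, hy⟩, rfl⟩ := hφ₂ t'
    exact ⟨⟨(x, y), by simp_all [ker_prodMap]⟩, rfl⟩
  · ext x
    change (φ₁ (π₁ x), φ₂ (π₂ x)) = 0 ↔ _
    rw [Prod.mk_eq_zero, ← mem_ker, ← mem_ker, hker₁, hker₂, Submodule.mem_comap,
      Submodule.mem_comap, Submodule.mem_comap, range_prodMap, Submodule.mem_prod]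
    rfl

theorem hasHomology_inl_comp_snd (g : N →ₗ[R] M) :
    HasHomology (inl R M N ∘ₗ g ∘ₗ snd R M N) ((M ⧸ range g) × ker g) := by
  have mem_ker_iff (x : M × N) : x ∈ ker (inl R M N ∘ₗ g ∘ₗ snd R M N) ↔ x.2 ∈ ker g := by
    simp
  let π : ker (inl R M N ∘ₗ g ∘ₗ snd R M N) →ₗ[R] ker g :=
    (snd R M N).restrict fun x hx => (mem_ker_iff x).mp hx
  refine ⟨((range g).mkQ ∘ₗ fst R M N ∘ₗ Submodule.subtype _).prod π, ?_, ?_⟩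
  · rintro ⟨m', q⟩
    obtain ⟨m, rfl⟩ := Submodule.mkQ_surjective _ m'
    exact ⟨⟨(m, q), (mem_ker_iff _).mpr q.2⟩, rfl⟩
  · ext ⟨⟨m, q⟩, hx⟩
    change ((range g).mkQ m, π ⟨(m, q), hx⟩) = 0 ↔ _
    rw [Prod.mk_eq_zero, Submodule.mkQ_apply, Submodule.Quotient.mk_eq_zero, Submodule.mem_comap,
      Submodule.subtype_apply, mem_range]
    have hπ : (π ⟨(m, q), hx⟩ : N) = q := rfl
    simp [Subtype.ext_iff, hπ, Prod.ext_iff, eq_comm]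

end Homology

namespace Finsupp

variable {R M ι : Type*}

theorem range_mapRange_linearMap_eq_submodule [Semiring R] [AddCommMonoid M] [Module R M]
    {N : Type*} [AddCommMonoid N] [Module R N] (f : M →ₗ[R] N) :
    range (mapRange.linearMap (α := ι) f) = Finsupp.submodule fun _ => range f :=
  SetLike.coe_injective (range_mapRange f f.map_zero)

noncomputable def submoduleEquivFinsupp [Semiring R] [AddCommMonoid M] [Module R M]
    (p : Submodule R M) :
    Finsupp.submodule (fun _ : ι => p) ≃ₗ[R] (ι →₀ p) :=
  (LinearEquiv.ofEq _ _ (by rw [range_mapRange_linearMap _ p.ker_subtype, p.range_subtype])).trans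
    (LinearEquiv.ofInjective _ (mapRange_injective _ rfl Subtype.val_injective)).symm

noncomputable def quotientSubmoduleEquiv [Ring R] [AddCommGroup M] [Module R M]
    (p : Submodule R M) :
    ((ι →₀ M) ⧸ Finsupp.submodule fun _ : ι => p) ≃ₗ[R] (ι →₀ M ⧸ p) :=
  (Submodule.quotEquivOfEq _ _ (by rw [ker_mapRange, p.ker_mkQ])).trans
    ((mapRange.linearMap p.mkQ).quotKerEquivOfSurjective
      (mapRange_surjective _ rfl p.mkQ_surjective))

end Finsupp

theorem range_lsmul_eq_span {R : Type*} [CommRing R] (c : R) :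
    range (lsmul R R c) = Ideal.span {c} := by
  ext x
  simp [Ideal.mem_span_singleton', eq_comm, mul_comm]

theorem hasHomology_mapRange_lsmul {R ι : Type*} [CommRing R] (c : R) :
    HasHomology (inl R (ι →₀ R) (ι →₀ R) ∘ₗ Finsupp.mapRange.linearMap (lsmul R R c) ∘ₗ snd R _ _)
      ((ι →₀ R ⧸ Ideal.span {c}) × (ι →₀ ker (lsmul R R c))) := by
  refine (hasHomology_inl_comp_snd _).congr (LinearEquiv.prodCongr ?_ ?_)
  · exact (Submodule.quotEquivOfEq _ _ (by rw [Finsupp.range_mapRange_linearMap_eq_submodule,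
      range_lsmul_eq_span])).trans (Finsupp.quotientSubmoduleEquiv _)
  · exact (LinearEquiv.ofEq _ _ (Finsupp.ker_mapRange _ _)).trans
      (Finsupp.submoduleEquivFinsupp _)

theorem CPdiff_single (b : CPBasis n) (a : k) :
    CPdiff k n (Finsupp.single b a) = a • CPd k n b := by
  simp [CPdiff]

theorem CPd_zero_false_succ (i : ℕ) :
    CPd k n (0, false, i + 1) = Finsupp.single (Fin.last n, true, i) ((n : k) + 1) := by
  simp [CPd, Finsupp.smul_single]

theorem CPd_apply (b : CPBasis n) (p : Fin (n + 1)) (e : Bool) (i : ℕ) :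
    CPd k n b (p, e, i)
      = if b = (0, false, i + 1) ∧ p = Fin.last n ∧ e = true then (n : k) + 1 else 0 := by
  rcases b with ⟨q, _ | _, _ | j⟩ <;> simp [CPd]
  split_ifs <;> simp_all [Finsupp.single_apply, eq_comm]
  split_ifs <;> simp_all

theorem CPdiff_comp_self : CPdiff k n ∘ₗ CPdiff k n = 0 := by
  refine Finsupp.lhom_ext fun b a => ?_
  rcases b with ⟨p, _ | _, _ | i⟩
  · simp [CPdiff_single, CPd]
  · by_cases hp : p = 0
    · subst hp
      rw [comp_apply, CPdiff_single, CPd_zero_false_succ, map_smul, CPdiff_single]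
      simp [CPd]
    · simp [CPdiff_single, CPd, hp]
  all_goals simp [CPdiff_single, CPd]

def CPBasis.ofSum : Unit ⊕ (Fin n × ℕ) ⊕ (Fin n × ℕ) ⊕ ℕ ⊕ ℕ → CPBasis n :=
  Sum.elim (fun _ => (0, false, 0)) <| Sum.elim (fun x => (x.1.succ, false, x.2)) <|
    Sum.elim (fun x => (x.1.castSucc, true, x.2)) <|
      Sum.elim (fun i => (Fin.last n, true, i)) fun j => (0, false, j + 1)

theorem CPBasis.ofSum_bijective : Function.Bijective (CPBasis.ofSum n) := by
  constructor
  · rintro (_ | ⟨p, i⟩ | ⟨p, i⟩ | i | i) (_ | ⟨q, j⟩ | ⟨q, j⟩ | j | j) h <;>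
      simp_all [CPBasis.ofSum, Fin.ext_iff] <;> omega
  · rintro ⟨p, _ | _, i⟩
    · induction p using Fin.cases with
      | zero => cases i with
        | zero => exact ⟨.inl (), rfl⟩
        | succ j => exact ⟨.inr (.inr (.inr (.inr j))), rfl⟩
      | succ q => exact ⟨.inr (.inl (q, i)), rfl⟩
    · induction p using Fin.lastCases with
      | last => exact ⟨.inr (.inr (.inr (.inl i))), rfl⟩
      | cast q => exact ⟨.inr (.inr (.inl (q, i))), rfl⟩

noncomputable def CPBasis.sumEquiv : Unit ⊕ (Fin n × ℕ) ⊕ (Fin n × ℕ) ⊕ ℕ ⊕ ℕ ≃ CPBasis n :=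
  Equiv.ofBijective (CPBasis.ofSum n) (CPBasis.ofSum_bijective n)

open Finsupp in
noncomputable def CPModule.equivProd :
    CPModule k n ≃ₗ[k] k × ((Fin n × ℕ) →₀ k) × ((Fin n × ℕ) →₀ k) × (ℕ →₀ k) × (ℕ →₀ k) :=
  (Finsupp.domLCongr (CPBasis.sumEquiv n).symm).trans <| (sumFinsuppLEquivProdFinsupp k).trans <|
    LinearEquiv.prodCongr (uniqueLinearEquiv k k ()) <| (sumFinsuppLEquivProdFinsupp k).trans <|
      LinearEquiv.prodCongr (LinearEquiv.refl _ _) <| (sumFinsuppLEquivProdFinsupp k).trans <|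
        LinearEquiv.prodCongr (LinearEquiv.refl _ _) (sumFinsuppLEquivProdFinsupp k)

noncomputable def CPModule.modelDiff :
    (k × ((Fin n × ℕ) →₀ k) × ((Fin n × ℕ) →₀ k) × (ℕ →₀ k) × (ℕ →₀ k)) →ₗ[k]
      k × ((Fin n × ℕ) →₀ k) × ((Fin n × ℕ) →₀ k) × (ℕ →₀ k) × (ℕ →₀ k) :=
  (0 : k →ₗ[k] k).prodMap <| (0 : _ →ₗ[k] _).prodMap <| (0 : _ →ₗ[k] _).prodMap <|
    inl k _ _ ∘ₗ Finsupp.mapRange.linearMap (lsmul k k ((n : k) + 1)) ∘ₗ snd k _ _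

section

variable {k n} (f : CPModule k n)

@[simp] theorem CPModule.equivProd_fst : (CPModule.equivProd k n f).1 = f (0, false, 0) := rfl
@[simp] theorem CPModule.equivProd_snd_fst (y : Fin n × ℕ) :
    (CPModule.equivProd k n f).2.1 y = f (y.1.succ, false, y.2) := rfl
@[simp] theorem CPModule.equivProd_snd_snd_fst (y : Fin n × ℕ) :
    (CPModule.equivProd k n f).2.2.1 y = f (y.1.castSucc, true, y.2) := rfl
@[simp] theorem CPModule.equivProd_snd_snd_snd_fst (i : ℕ) :
    (CPModule.equivProd k n f).2.2.2.1 i = f (Fin.last n, true, i) := rfl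
@[simp] theorem CPModule.equivProd_snd_snd_snd_snd (j : ℕ) :
    (CPModule.equivProd k n f).2.2.2.2 j = f (0, false, j + 1) := rfl

end

theorem CPModule.equivProd_comp_CPdiff :
    (CPModule.equivProd k n).toLinearMap ∘ₗ CPdiff k n
      = CPModule.modelDiff k n ∘ₗ (CPModule.equivProd k n).toLinearMap := by
  refine Finsupp.lhom_ext fun b a => ?_
  simp only [comp_apply, LinearEquiv.coe_coe, CPdiff_single, CPModule.modelDiff, prodMap_apply]
  ext <;> simp [Finsupp.single_apply, CPd_apply, Fin.castSucc_ne_last]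
  split_ifs <;> ring

def natSuccEquiv : ℕ ≃ {i : ℕ // 1 ≤ i} where
  toFun j := ⟨j + 1, Nat.le_add_left 1 j⟩
  invFun i := i.1 - 1
  left_inv _ := rfl
  right_inv i := Subtype.ext (Nat.sub_add_cancel i.2)

theorem free_loop_cohomology_CPn :
    -- it is a complex
    CPdiff k n ∘ₗ CPdiff k n = 0 ∧
    -- and its homology `ker/im` is the asserted `k`-module: we express the
    -- isomorphism `ker D̄ / im D̄ ≃ T` by a surjection `ker D̄ → T` whose kernel
    -- is exactly the image of `D̄`.
    ∃ φ : LinearMap.ker (CPdiff k n) →ₗ[k]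
      (k ×                                     -- the unit `1`
       ((Fin n × ℕ) →₀ k) ×                    -- `x^p γ^i(sy)`, `1 ≤ p ≤ n`
       ((Fin n × ℕ) →₀ k) ×                    -- `x^p (sx) γ^i(sy)`, `0 ≤ p ≤ n-1`
       (ℕ →₀ (k ⧸ Ideal.span {((n : k) + 1)})) ×       -- `(k/(n+1)k)·xⁿ(sx)γ^i(sy)`
       ({i : ℕ // 1 ≤ i} →₀ LinearMap.ker (LinearMap.lsmul k k ((n : k) + 1)))),
                                               -- `(ₙ₊₁k)·γ^i(sy)`, `i ≥ 1`
      Function.Surjective φ ∧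
      LinearMap.ker φ
        = (LinearMap.range (CPdiff k n)).comap (LinearMap.ker (CPdiff k n)).subtype := by
  refine ⟨CPdiff_comp_self k n, ?_⟩
  have hTwoTerm := (hasHomology_mapRange_lsmul ((n : k) + 1)).congr
    (LinearEquiv.prodCongr (LinearEquiv.refl _ _) (Finsupp.domLCongr natSuccEquiv))
  exact (hasHomology_zero.prodMap <| hasHomology_zero.prodMap <| hasHomology_zero.prodMap
    hTwoTerm).of_conj (CPModule.equivProd k n) (CPModule.equivProd_comp_CPdiff k n)
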